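/- The Cauchy probability measure on ℝ with density (1/π)·1/(1+s²) is invariant under the map s ↦ (s cos θ - sin θ)/(s sin θ + cos θ) for every θ, i.e., under the projective (Möbius) action of rotation matrices R_θ ∈ SO(2) on the anti-slope coordinate of ℝP¹. -/

import Mathlib

open MeasureTheory Real

/-- One-variable lintegral change of variables. -/
lemma lintegral_image_eq_lintegral_abs_deriv_mul' {s : Set ℝ} {f f' : ℝ → ℝ}
    (hs : MeasurableSet s) (hf' : ∀ x ∈ s, HasDerivWithinAt f (f' x) s x)
    (hf : Set.InjOn f s) (g : ℝ → ENNReal) :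
    ∫⁻ x in f '' s, g x = ∫⁻ x in s, ENNReal.ofReal |f' x| * g (f x) := by
  simpa only [ContinuousLinearMap.det_toSpanSingleton] using
    lintegral_image_eq_lintegral_abs_det_fderiv_mul volume hs
      (fun x hx => (hf' x hx).hasFDerivWithinAt) hf g

/-- The Cauchy measure `(1/π)·1/(1+s²) ds` on ℝ is invariant under the
projective (Möbius) action `s ↦ (s cos θ - sin θ)/(s sin θ + cos θ)` of
every rotation matrix `R_θ ∈ SO(2)`. -/
theorem stmt_4 (θ : ℝ) :
    Measure.map (fun s : ℝ => (s * Real.cos θ - Real.sin θ) / (s * Real.sin θ + Real.cos θ))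
      (volume.withDensity (fun s : ℝ => ENNReal.ofReal ((1 / π) * (1 / (1 + s ^ 2))))) =
    volume.withDensity (fun s : ℝ => ENNReal.ofReal ((1 / π) * (1 / (1 + s ^ 2)))) := by
  set c := Real.cos θ with hc
  set d := Real.sin θ with hd
  have hcd : d ^ 2 + c ^ 2 = 1 := Real.sin_sq_add_cos_sq θ
  set f : ℝ → ℝ := fun s => (s * c - d) / (s * d + c) with hf
  set g : ℝ → ENNReal := fun s => ENNReal.ofReal ((1 / π) * (1 / (1 + s ^ 2))) with hg
  by_cases hd0 : d = 0
  · -- rotation by 0 or π: the map is the identity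
    have hc1 : c ^ 2 = 1 := by rw [← hcd, hd0]; ring
    have hc0 : c ≠ 0 := by intro h; rw [h] at hc1; norm_num at hc1
    have : f = id := by
      funext x
      simp only [f, hd0, mul_zero, zero_add, sub_zero, id]
      field_simp
    rw [this, Measure.map_id]
  · -- generic case: sin θ ≠ 0
    have hfm : Measurable f := by
      apply Measurable.div
      · exact (measurable_id.mul_const _).sub_const _
      · exact (measurable_id.mul_const _).add_const _
    set S : Set ℝ := {x | x * d + c ≠ 0} with hS
    have hSm : MeasurableSet S := by
      have : S = (fun x : ℝ => x * d + c) ⁻¹' ({0}ᶜ) := rfl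
      rw [this]
      exact ((measurable_id.mul_const _).add_const _) (measurableSet_singleton 0).compl
    have hScompl : Sᶜ = {-c / d} := by
      ext x
      simp only [Set.mem_compl_iff, hS, Set.mem_setOf_eq, not_not, Set.mem_singleton_iff]
      constructor
      · intro h; field_simp; linarith
      · intro h; rw [h]; field_simp; ring
    have hSnull : volume Sᶜ = 0 := by rw [hScompl]; exact measure_singleton _
    -- derivative
    set D : ℝ → ℝ := fun x => ((x * d + c) ^ 2)⁻¹ with hD
    have hderiv : ∀ x ∈ S, HasDerivWithinAt f (D x) S x := by
      intro x hx
      have hx' : x * d + c ≠ 0 := hx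
      have h1 : HasDerivAt (fun y : ℝ => y * c - d) c x := by
        simpa using ((hasDerivAt_id x).mul_const c).sub_const d
      have h2 : HasDerivAt (fun y : ℝ => y * d + c) d x := by
        simpa using ((hasDerivAt_id x).mul_const d).add_const c
      have := h1.div h2 hx'
      have heq : (c * (x * d + c) - (x * c - d) * d) / (x * d + c) ^ 2 = D x := by
        have h1 : c * (x * d + c) - (x * c - d) * d = 1 := by nlinarith [hcd]
        rw [h1]
        show (1:ℝ) / (x * d + c) ^ 2 = ((x * d + c) ^ 2)⁻¹
        rw [one_div]
      rw [heq] at this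
      exact this.hasDerivWithinAt
    -- injectivity
    have hinj : Set.InjOn f S := by
      intro a ha b hb hab
      have ha' : a * d + c ≠ 0 := ha
      have hb' : b * d + c ≠ 0 := hb
      rw [hf, div_eq_div_iff ha' hb'] at hab
      nlinarith [hcd]
    -- image
    have himg : f '' S = {c / d}ᶜ := by
      ext y
      constructor
      · rintro ⟨x, hx, rfl⟩
        have hx' : x * d + c ≠ 0 := hx
        simp only [Set.mem_compl_iff, Set.mem_singleton_iff]
        intro h
        rw [hf, div_eq_div_iff hx' hd0] at h
        nlinarith [hcd]
      · intro hy
        have hy' : c - y * d ≠ 0 := by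
          simp only [Set.mem_compl_iff, Set.mem_singleton_iff] at hy
          intro h
          apply hy
          field_simp
          linarith
        have h2 : (y * c + d) / (c - y * d) * d + c = 1 / (c - y * d) := by
          field_simp
          linear_combination hcd
        refine ⟨(y * c + d) / (c - y * d), ?_, ?_⟩
        · show (y * c + d) / (c - y * d) * d + c ≠ 0
          rw [h2]
          exact one_div_ne_zero hy'
        · show ((y * c + d) / (c - y * d) * c - d) / ((y * c + d) / (c - y * d) * d + c) = y
          have h1 : (y * c + d) / (c - y * d) * c - d = y / (c - y * d) := by
            field_simp
            linear_combination y * hcd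
          rw [h1, h2, div_div_div_eq]
          field_simp
    -- key pointwise density identity
    have hkey : ∀ x ∈ S, ENNReal.ofReal |D x| * g (f x) = g x := by
      intro x hx
      have hx' : x * d + c ≠ 0 := hx
      have hx2 : (0:ℝ) < 1 + x ^ 2 := by positivity
      have hDpos : (0:ℝ) < D x := by rw [hD]; positivity
      have hfx : 1 + f x ^ 2 = (1 + x ^ 2) / (x * d + c) ^ 2 := by
        rw [hf]
        field_simp
        nlinarith [hcd]
      rw [abs_of_pos hDpos, hg]
      rw [← ENNReal.ofReal_mul (le_of_lt hDpos)]
      congr 1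
      rw [hfx, hD]
      field_simp
    -- ae facts
    have hae : ∀ᵐ x : ℝ, x ∈ S := by
      have := measure_eq_zero_iff_ae_notMem.mp hSnull
      filter_upwards [this] with x hx
      simpa using hx
    have hy0null : volume ({c / d} : Set ℝ) = 0 := measure_singleton _
    -- the measure computation
    apply Measure.ext
    intro t ht
    rw [Measure.map_apply hfm ht, withDensity_apply _ (hfm ht), withDensity_apply _ ht]
    have step1 : ∫⁻ x in t, g x = ∫⁻ x in t ∩ {c / d}ᶜ, g x := by
      apply (setLIntegral_congr _).symm
      have : ∀ᵐ x : ℝ, x ∉ ({c / d} : Set ℝ) := measure_eq_zero_iff_ae_notMem.mp hy0null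
      filter_upwards [this] with x hx
      simp only [Set.mem_inter_iff, Set.mem_compl_iff, eq_iff_iff]
      exact ⟨fun h => h.1, fun h => ⟨h, hx⟩⟩
    have step2 : t ∩ {c / d}ᶜ = f '' (f ⁻¹' t ∩ S) := by
      rw [Set.image_preimage_inter, himg]
    have step3 : ∫⁻ x in f '' (f ⁻¹' t ∩ S), g x
        = ∫⁻ x in f ⁻¹' t ∩ S, ENNReal.ofReal |D x| * g (f x) := by
      apply lintegral_image_eq_lintegral_abs_deriv_mul' ((hfm ht).inter hSm)
        (fun x hx => (hderiv x hx.2).mono Set.inter_subset_right)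
        (hinj.mono Set.inter_subset_right)
    have step4 : ∫⁻ x in f ⁻¹' t ∩ S, ENNReal.ofReal |D x| * g (f x)
        = ∫⁻ x in f ⁻¹' t ∩ S, g x := by
      apply setLIntegral_congr_fun_ae ((hfm ht).inter hSm)
      exact Filter.Eventually.of_forall (fun x hx => hkey x hx.2)
    have step5 : ∫⁻ x in f ⁻¹' t ∩ S, g x = ∫⁻ x in f ⁻¹' t, g x := by
      apply setLIntegral_congr
      filter_upwards [hae] with x hx
      simp only [Set.mem_inter_iff, eq_iff_iff]
      exact ⟨fun h => h.1, fun h => ⟨h, hx⟩⟩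
    rw [step1, step2, step3, step4, step5]
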